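/- For matrices W_1, W_2 with W_2 W_1 = M and positive semidefinite B_1, B_2, one has ‖B_1 W_2‖_F² + ‖W_1 B_2‖_F² ≥ 2‖B_1 M B_2‖_*. -/

import Mathlib

/-!
Write `B₁ M B₂ = X Y` with `X = B₁ W₂`, `Y = W₁ B₂`. A singular value decomposition gives
orthonormal families `uᵢ`, `vᵢ` with `‖X Y‖_* = ∑ᵢ ⟪uᵢ, X Y vᵢ⟫ = ∑ᵢ ⟪Xᵀ uᵢ, Y vᵢ⟫`.
By AM-GM each term is at most `(‖Xᵀ uᵢ‖² + ‖Y vᵢ‖²) / 2`, and Bessel's inequality, applied to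
each row of a matrix `A`, gives `∑ᵢ ‖A wᵢ‖² ≤ ‖A‖_F²` for any orthonormal family `wᵢ`.
-/

open Matrix Finset

noncomputable def frobNorm {m n : Type*} [Fintype m] [Fintype n] (M : Matrix m n ℝ) : ℝ :=
  Real.sqrt (∑ i, ∑ j, (M i j) ^ 2)

noncomputable def nuclearNorm {m n : Type*} [Fintype m] [Fintype n] [DecidableEq n]
    (M : Matrix m n ℝ) : ℝ :=
  ∑ i, Real.sqrt ((show (Mᵀ * M).IsHermitian by
    simp [IsHermitian, conjTranspose_eq_transpose_of_trivial]).eigenvalues i)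

open scoped InnerProductSpace

universe u

variable {m k ι : Type*} {n : Type u} [Fintype m] [Fintype k] [Fintype n]

lemma frobNorm_sq (A : Matrix m n ℝ) : frobNorm A ^ 2 = ∑ i, ∑ j, A i j ^ 2 :=
  Real.sq_sqrt (by positivity)

lemma frobNorm_transpose (A : Matrix m n ℝ) : frobNorm Aᵀ = frobNorm A := by
  rw [frobNorm, frobNorm, sum_comm]
  rfl

lemma sum_norm_toEuclideanLin_sq_le_frobNorm_sq [DecidableEq n] (A : Matrix m n ℝ)
    (s : Finset ι) {v : ι → EuclideanSpace ℝ n} (hv : Orthonormal ℝ v) :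
    ∑ i ∈ s, ‖toEuclideanLin A (v i)‖ ^ 2 ≤ frobNorm A ^ 2 :=
  calc ∑ i ∈ s, ‖toEuclideanLin A (v i)‖ ^ 2
      = ∑ j, ∑ i ∈ s, ‖⟪v i, WithLp.toLp 2 (A j)⟫_ℝ‖ ^ 2 := by
        simp_rw [EuclideanSpace.real_norm_sq_eq, Real.norm_eq_abs, sq_abs, toLpLin_apply]
        rw [sum_comm]
        simp [PiLp.inner_apply, mulVec, dotProduct]
    _ ≤ ∑ j, ‖WithLp.toLp 2 (A j)‖ ^ 2 := sum_le_sum fun j _ => hv.sum_inner_products_le _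
    _ = frobNorm A ^ 2 := by simp [frobNorm_sq, EuclideanSpace.real_norm_sq_eq]

lemma two_mul_sum_inner_mul_le_frobNorm_sq [DecidableEq m] [DecidableEq k] [DecidableEq n]
    (X : Matrix m k ℝ) (Y : Matrix k n ℝ) (s : Finset ι)
    {u : ι → EuclideanSpace ℝ m} {v : ι → EuclideanSpace ℝ n}
    (hu : Orthonormal ℝ u) (hv : Orthonormal ℝ v) :
    2 * ∑ i ∈ s, ⟪u i, toEuclideanLin (X * Y) (v i)⟫_ℝ ≤ frobNorm X ^ 2 + frobNorm Y ^ 2 := by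
  have h_adjoint : ∀ i, ⟪u i, toEuclideanLin (X * Y) (v i)⟫_ℝ
      = ⟪toEuclideanLin Xᵀ (u i), toEuclideanLin Y (v i)⟫_ℝ := fun i => by
    rw [← conjTranspose_eq_transpose_of_trivial, toEuclideanLin_conjTranspose_eq_adjoint,
      LinearMap.adjoint_inner_left, toLpLin_mul_same]
    rfl
  have amgm : ∀ a b : EuclideanSpace ℝ k, 2 * ⟪a, b⟫_ℝ ≤ ‖a‖ ^ 2 + ‖b‖ ^ 2 := fun a b => by
    nlinarith [real_inner_le_norm a b, two_mul_le_add_sq ‖a‖ ‖b‖]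
  calc 2 * ∑ i ∈ s, ⟪u i, toEuclideanLin (X * Y) (v i)⟫_ℝ
      ≤ ∑ i ∈ s, (‖toEuclideanLin Xᵀ (u i)‖ ^ 2 + ‖toEuclideanLin Y (v i)‖ ^ 2) := by
        rw [mul_sum]
        exact sum_le_sum fun i _ => h_adjoint i ▸ amgm _ _
    _ ≤ frobNorm Xᵀ ^ 2 + frobNorm Y ^ 2 := by
        rw [sum_add_distrib]
        exact add_le_add (sum_norm_toEuclideanLin_sq_le_frobNorm_sq _ s hu)
          (sum_norm_toEuclideanLin_sq_le_frobNorm_sq _ s hv)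
    _ = frobNorm X ^ 2 + frobNorm Y ^ 2 := by rw [frobNorm_transpose]

lemma inner_toEuclideanLin_eigenvectorBasis [DecidableEq m] [DecidableEq n] (C : Matrix m n ℝ)
    (hC : (Cᵀ * C).IsHermitian) (i j : n) :
    ⟪toEuclideanLin C (hC.eigenvectorBasis i), toEuclideanLin C (hC.eigenvectorBasis j)⟫_ℝ
      = if i = j then hC.eigenvalues i else 0 := by
  rw [← LinearMap.adjoint_inner_right, ← toEuclideanLin_conjTranspose_eq_adjoint,
    conjTranspose_eq_transpose_of_trivial, ← LinearMap.comp_apply, ← toLpLin_mul_same,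
    toLpLin_apply, hC.mulVec_eigenvectorBasis, WithLp.toLp_smul, WithLp.toLp_ofLp,
    inner_smul_right, orthonormal_iff_ite.mp hC.eigenvectorBasis.orthonormal]
  split_ifs with h <;> simp [h]

/-- The right singular vectors are the eigenvectors `vᵢ` of `Cᵀ C`; for each nonzero singular value
`σᵢ = √λᵢ` the left singular vector is `uᵢ = σᵢ⁻¹ C vᵢ`. -/
lemma exists_orthonormal_nuclearNorm_eq_sum_inner [DecidableEq m] [DecidableEq n]
    (C : Matrix m n ℝ) :
    ∃ (ι : Type u) (_ : Fintype ι) (u : ι → EuclideanSpace ℝ m) (v : ι → EuclideanSpace ℝ n),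
      Orthonormal ℝ u ∧ Orthonormal ℝ v ∧
        nuclearNorm C = ∑ i, ⟪u i, toEuclideanLin C (v i)⟫_ℝ := by
  have hC : (Cᵀ * C).IsHermitian := by
    simp [IsHermitian, conjTranspose_eq_transpose_of_trivial]
  set σ : n → ℝ := fun i => √(hC.eigenvalues i)
  have hσ_sq : ∀ i, σ i ^ 2 = hC.eigenvalues i := fun i =>
    Real.sq_sqrt (eigenvalues_conjTranspose_mul_self_nonneg C i)
  have hT := inner_toEuclideanLin_eigenvectorBasis C hC
  refine ⟨{i // σ i ≠ 0}, inferInstance,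
    fun i => (σ i)⁻¹ • toEuclideanLin C (hC.eigenvectorBasis i), fun i => hC.eigenvectorBasis i,
    ?_, hC.eigenvectorBasis.orthonormal.comp _ Subtype.val_injective, ?_⟩
  · rw [orthonormal_iff_ite]
    rintro ⟨i, hi⟩ ⟨j, hj⟩
    simp only [real_inner_smul_left, real_inner_smul_right, hT, Subtype.mk.injEq, ← hσ_sq]
    split_ifs with h
    · subst h
      field_simp
    · simp
  · calc nuclearNorm C = ∑ i, σ i := rfl
      _ = ∑ i : {i // σ i ≠ 0}, σ i :=
        (sum_filter_ne_zero _).symm.trans (sum_subtype _ (by simp) σ)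
      _ = _ := Fintype.sum_congr _ _ fun ⟨i, hi⟩ => by
        simp only [real_inner_smul_left, hT, if_true, ← hσ_sq]
        field_simp

lemma two_mul_nuclearNorm_mul_le_frobNorm_sq [DecidableEq m] [DecidableEq k] [DecidableEq n]
    (X : Matrix m k ℝ) (Y : Matrix k n ℝ) :
    2 * nuclearNorm (X * Y) ≤ frobNorm X ^ 2 + frobNorm Y ^ 2 := by
  obtain ⟨ι, _, u, v, hu, hv, h⟩ := exists_orthonormal_nuclearNorm_eq_sum_inner (X * Y)
  rw [h]
  exact two_mul_sum_inner_mul_le_frobNorm_sq X Y univ hu hv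

theorem frob_sq_add_ge_two_nuclear_general {d0 d1 d2 : ℕ}
    (W1 : Matrix (Fin d1) (Fin d0) ℝ) (W2 : Matrix (Fin d2) (Fin d1) ℝ)
    (M : Matrix (Fin d2) (Fin d0) ℝ) (hM : W2 * W1 = M)
    (B1 : Matrix (Fin d2) (Fin d2) ℝ)
    (B2 : Matrix (Fin d0) (Fin d0) ℝ) :
    2 * nuclearNorm (B1 * M * B2)
      ≤ frobNorm (B1 * W2) ^ 2 + frobNorm (W1 * B2) ^ 2 := by
  have h_factor : B1 * M * B2 = (B1 * W2) * (W1 * B2) := by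
    rw [← hM, Matrix.mul_assoc, Matrix.mul_assoc, Matrix.mul_assoc]
  rw [h_factor]
  exact two_mul_nuclearNorm_mul_le_frobNorm_sq _ _

/-- ‖B₁W₂‖_F² + ‖W₁B₂‖_F² ≥ 2‖B₁ M B₂‖_* when W₂W₁ = M and B₁, B₂ are PSD. -/
theorem frob_sq_add_ge_two_nuclear {d0 d1 d2 : ℕ}
    (W1 : Matrix (Fin d1) (Fin d0) ℝ) (W2 : Matrix (Fin d2) (Fin d1) ℝ)
    (M : Matrix (Fin d2) (Fin d0) ℝ) (hM : W2 * W1 = M)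
    (B1 : Matrix (Fin d2) (Fin d2) ℝ) (hB1 : B1.PosSemidef)
    (B2 : Matrix (Fin d0) (Fin d0) ℝ) (hB2 : B2.PosSemidef) :
    2 * nuclearNorm (B1 * M * B2)
      ≤ frobNorm (B1 * W2) ^ 2 + frobNorm (W1 * B2) ^ 2 :=
  frob_sq_add_ge_two_nuclear_general W1 W2 M hM B1 B2
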